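/- arXiv:2502.08740 — 2 statements merged into one kernel-verified Lean document; each statement's English description precedes it below -/
import Mathlib

section
/- Let T > 0, c_M > 0, and let σ_A, σ_S : (0,∞) → [0,∞) be measurable. Suppose ω, k ∈ ℂ, δT ∈ ℂ, and a measurable δf : ℝ³∖{0} → ℂ satisfy the plane-wave radiative transfer system (i)–(ii) with the finiteness assumptions as in Theorem 2. Then the following plane-wave entropy balance identity holds: −i[ c_M ω |δT|²/T² + ∫_{ℝ³} w(|p|)(ω − k p¹/|p|)|δf(p)|² d³p ] = −∫_{ℝ³} w(|p|)[ σ_A(|p|)|δf_BB(|p|) − δf(p)|² + σ_S(|p|)|δf̄(|p|) − δf(p)|² ] d³p. -/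
/-! Statement 2: plane-wave entropy balance identity (the plane-wave analog of
the second law of thermodynamics) for the linearized radiative transfer system. -/

noncomputable section
open MeasureTheory Real Set

/-- Physical momentum space `ℝ³`. -/
abbrev R3 : Type := EuclideanSpace ℝ (Fin 3)

/-- Black-body occupation number `f_BB(q) = 1/(e^{q/T} - 1)`. -/
def fBB (T q : ℝ) : ℝ := 1 / (Real.exp (q / T) - 1)

/-- Entropy weight `w(q) = 2 / ((2π)³ f_BB(q)(1 + f_BB(q)))`. -/
def wgt (T q : ℝ) : ℝ := 2 / ((2 * Real.pi) ^ 3 * (fBB T q * (1 + fBB T q)))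

/-- Perturbation of the black-body distribution,
`δf_BB(q) = f_BB(q)(1 + f_BB(q)) q δT / T²`. -/
def δfBB (T : ℝ) (δT : ℂ) (q : ℝ) : ℂ :=
  ((fBB T q * (1 + fBB T q) * q / T ^ 2 : ℝ) : ℂ) * δT

/-- Average of `δf` over the unit sphere of directions at energy `q`:
`δf̄(q) = (1/(4π)) ∫_{S²} δf(qΩ) dσ(Ω)`. -/
def sphAvg (δf : R3 → ℂ) (q : ℝ) : ℂ :=
  (4 * Real.pi : ℝ)⁻¹ •
    ∫ Ω : Metric.sphere (0 : R3) 1, δf (q • (Ω : R3)) ∂((volume : Measure R3).toSphere)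

/-- The collision term
`σ_A(|p|)(δf_BB(|p|) − δf(p)) + σ_S(|p|)(δf̄(|p|) − δf(p))`. -/
def coll (σA σS : ℝ → ℝ) (T : ℝ) (δT : ℂ) (δf : R3 → ℂ) (p : R3) : ℂ :=
  (σA ‖p‖ : ℝ) * (δfBB T δT ‖p‖ - δf p) + (σS ‖p‖ : ℝ) * (sphAvg δf ‖p‖ - δf p)


/-! ### Auxiliary lemmas -/

lemma toSphere_univ_R3 : ((volume : Measure R3).toSphere Set.univ).toReal = 4 * Real.pi := by
  have h52 : Real.Gamma ((3:ℝ)/2 + 1) = 3/4 * Real.sqrt π := by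
    rw [Real.Gamma_add_one (by norm_num)]
    have h32 : (3:ℝ)/2 = 1/2 + 1 := by norm_num
    rw [h32, Real.Gamma_add_one (by norm_num), Real.Gamma_one_half_eq]; ring
  have hval : Real.sqrt π ^ 3 / Real.Gamma ((3:ℝ)/2 + 1) = 4/3 * π := by
    rw [h52]
    have hs : Real.sqrt π ^ 2 = π := Real.sq_sqrt Real.pi_pos.le
    have hs0 : Real.sqrt π ≠ 0 := by positivity
    field_simp
    linear_combination hs
  rw [MeasureTheory.Measure.toSphere_apply_univ, EuclideanSpace.volume_ball (Fin 3) 0 1]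
  simp only [finrank_euclideanSpace, Fintype.card_fin]
  rw [show ((3:ℕ):ℝ)/2 + 1 = (3:ℝ)/2 + 1 by norm_num, hval]
  rw [ENNReal.toReal_mul, ENNReal.toReal_mul]
  simp [ENNReal.toReal_ofReal (by positivity : (0:ℝ) ≤ 4/3*π)]
  ring

/-- The integral over `ℝ³` of a radial function times `(δf̄(|p|) − δf(p))` vanishes:
the sphere average of `δf̄(|p|) − δf(p)` is zero at each energy. -/
lemma integral_sphere_diff_zero (δf : R3 → ℂ) (G : ℝ → ℂ)
    (hu : Integrable (fun p : R3 => G ‖p‖ * (sphAvg δf ‖p‖ - δf p))) :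
    ∫ p : R3, G ‖p‖ * (sphAvg δf ‖p‖ - δf p) = 0 := by
  set u : R3 → ℂ := fun p => G ‖p‖ * (sphAvg δf ‖p‖ - δf p) with hu_def
  have hs : MeasurableSet ({(0:R3)}ᶜ) := (measurableSet_singleton _).compl
  set ν := (volume : Measure R3).comap ((↑) : ({(0:R3)}ᶜ : Set R3) → R3) with hν
  have hmp := (volume : Measure R3).measurePreserving_homeomorphUnitSphereProd
  have hemb := (homeomorphUnitSphereProd R3).measurableEmbedding
  set g : Metric.sphere (0:R3) 1 × Set.Ioi (0:ℝ) → ℂ :=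
    fun x => G x.2.1 * (sphAvg δf x.2.1 - δf ((x.2.1 : ℝ) • (x.1 : R3))) with hg
  have hcomp : ∀ x : ({(0:R3)}ᶜ : Set R3), g (homeomorphUnitSphereProd R3 x) = u x.1 := by
    intro x
    have hx : ‖(x:R3)‖ ≠ 0 := norm_ne_zero_iff.2 x.2
    simp only [g, u, homeomorphUnitSphereProd_apply_fst_coe,
      homeomorphUnitSphereProd_apply_snd_coe, smul_inv_smul₀ hx]
  have hui : Integrable (fun x : ({(0:R3)}ᶜ : Set R3) => u x.1) ν := by
    have hmap : Measure.map ((↑) : ({(0:R3)}ᶜ : Set R3) → R3) ν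
        = (volume : Measure R3).restrict ({(0:R3)}ᶜ) := by
      rw [hν, (MeasurableEmbedding.subtype_coe hs).map_comap, Subtype.range_coe]
    have : Integrable u (Measure.map ((↑) : ({(0:R3)}ᶜ : Set R3) → R3) ν) := by
      rw [hmap, restrict_compl_singleton]; exact hu
    exact ((MeasurableEmbedding.subtype_coe hs).integrable_map_iff.mp this)
  have hgi : Integrable g ((volume : Measure R3).toSphere.prod
      (Measure.volumeIoiPow (Module.finrank ℝ R3 - 1))) := by
    rw [← hmp.integrable_comp_emb hemb]
    exact hui.congr (Filter.Eventually.of_forall fun x => (hcomp x).symm)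
  have h1 : ∫ p, u p = ∫ x : ({(0:R3)}ᶜ : Set R3), u x.1 ∂ν := by
    rw [hν, integral_subtype_comap hs, restrict_compl_singleton]
  have h2 : ∫ x : ({(0:R3)}ᶜ : Set R3), u x.1 ∂ν = ∫ y, g y
      ∂((volume : Measure R3).toSphere.prod
        (Measure.volumeIoiPow (Module.finrank ℝ R3 - 1))) := by
    rw [← hmp.integral_comp hemb g]
    exact integral_congr_ae (Filter.Eventually.of_forall fun x => (hcomp x).symm)
  rw [h1, h2, MeasureTheory.integral_prod_symm g hgi]
  have h4 := hgi.prod_left_ae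
  have h5 : ∀ᵐ r ∂(Measure.volumeIoiPow (Module.finrank ℝ R3 - 1)),
      (∫ Ω, g (Ω, r) ∂(volume : Measure R3).toSphere) = 0 := by
    filter_upwards [h4] with r hr
    by_cases hG : G r.1 = 0
    · simp [g, hG]
    · have h2' : Integrable (fun Ω : Metric.sphere (0:R3) 1 =>
          sphAvg δf r.1 - δf ((r.1 : ℝ) • (Ω : R3))) (volume : Measure R3).toSphere := by
        have h := hr.const_mul (G r.1)⁻¹
        refine h.congr (Filter.Eventually.of_forall fun Ω => ?_)
        simp only [g]; rw [inv_mul_cancel_left₀ hG]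
      have h3' : Integrable (fun Ω : Metric.sphere (0:R3) 1 => δf ((r.1 : ℝ) • (Ω : R3)))
          (volume : Measure R3).toSphere := by
        have h := (integrable_const (μ := (volume : Measure R3).toSphere)
          (sphAvg δf r.1)).sub h2'
        refine h.congr (Filter.Eventually.of_forall fun Ω => ?_)
        simp
      have hmul : (∫ Ω, g (Ω, r) ∂(volume : Measure R3).toSphere)
          = G r.1 * ∫ Ω : Metric.sphere (0:R3) 1,
              (sphAvg δf r.1 - δf ((r.1 : ℝ) • (Ω : R3))) ∂(volume : Measure R3).toSphere := by
        rw [← integral_const_mul]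
      rw [hmul, integral_sub (integrable_const _) h3', integral_const, measureReal_def, toSphere_univ_R3]
      rw [sphAvg, smul_smul, mul_inv_cancel₀ (by positivity : (4*Real.pi : ℝ) ≠ 0), one_smul,
        sub_self, mul_zero]
  rw [integral_congr_ae h5, integral_zero]

theorem radiative_transfer_entropy_balance
    (T cM : ℝ) (hT : 0 < T) (hcM : 0 < cM)
    (σA σS : ℝ → ℝ) (hσAm : Measurable σA) (hσSm : Measurable σS)
    (hσA : ∀ q ∈ Ioi (0 : ℝ), 0 ≤ σA q) (hσS : ∀ q ∈ Ioi (0 : ℝ), 0 ≤ σS q)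
    (ω k : ℂ) (δT : ℂ) (δf : R3 → ℂ) (hδf : Measurable δf)
    -- equation (i): energy conservation
    (heq1 : -Complex.I * cM * ω * δT =
      -∫ p : R3, ((2 / (2 * Real.pi) ^ 3 * ‖p‖ : ℝ) : ℂ) * coll σA σS T δT δf p)
    -- equation (ii): Boltzmann equation, for a.e. p
    (heq2 : ∀ᵐ p : R3, -Complex.I * (ω - k * ((p 0 / ‖p‖ : ℝ) : ℂ)) * δf p =
      coll σA σS T δT δf p)
    -- finiteness assumptions
    (hInt1 : Integrable (fun p : R3 => wgt T ‖p‖ * ‖δf p‖ ^ 2))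
    (hInt2 : Integrable (fun p : R3 => wgt T ‖p‖ * σA ‖p‖ * ‖δfBB T δT ‖p‖ - δf p‖ ^ 2))
    (hInt3 : Integrable (fun p : R3 => wgt T ‖p‖ * σS ‖p‖ * ‖sphAvg δf ‖p‖ - δf p‖ ^ 2))
    (hInt4 : Integrable (fun p : R3 =>
      ((2 / (2 * Real.pi) ^ 3 * ‖p‖ : ℝ) : ℂ) * coll σA σS T δT δf p))
    :
    -Complex.I * ((cM * ‖δT‖ ^ 2 / T ^ 2 : ℝ) * ω +
        ∫ p : R3, ((wgt T ‖p‖ * ‖δf p‖ ^ 2 : ℝ) : ℂ) * (ω - k * ((p 0 / ‖p‖ : ℝ) : ℂ))) =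
      -((∫ p : R3, wgt T ‖p‖ * (σA ‖p‖ * ‖δfBB T δT ‖p‖ - δf p‖ ^ 2 +
            σS ‖p‖ * ‖sphAvg δf ‖p‖ - δf p‖ ^ 2) : ℝ) : ℂ) := by
  classical
  have hT0 : T ≠ 0 := hT.ne'
  have hTc : (T:ℂ) ≠ 0 := by exact_mod_cast hT0
  have hzz : ∀ z : ℂ, z * (starRingEnd ℂ) z = ((‖z‖:ℝ):ℂ)^2 := by
    intro z
    rw [Complex.mul_conj]; norm_cast; rw [Complex.normSq_eq_norm_sq]
  have hae0 : ∀ᵐ p : R3, p ≠ (0:R3) := by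
    rw [ae_iff]
    simp only [ne_eq, not_not]
    have : {p : R3 | p = 0} = {(0:R3)} := by ext p; simp
    rw [this]
    exact measure_singleton 0
  have hfBBpos : ∀ q : ℝ, 0 < q → 0 < fBB T q := by
    intro q hq
    have h1 : 1 < Real.exp (q/T) := Real.one_lt_exp_iff.mpr (by positivity)
    have : 0 < Real.exp (q/T) - 1 := by linarith
    exact div_pos one_pos this
  have hwpos : ∀ q : ℝ, 0 < q → 0 < wgt T q := by
    intro q hq
    have h1 := hfBBpos q hq
    have h2 : 0 < fBB T q * (1 + fBB T q) := mul_pos h1 (by linarith)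
    exact div_pos two_pos (mul_pos (by positivity) h2)
  have hfm : Measurable (fBB T) := by
    unfold fBB
    exact measurable_const.div ((Real.measurable_exp.comp (measurable_id.div_const T)).sub
      measurable_const)
  have hwm : Measurable (wgt T) := by
    unfold wgt
    exact measurable_const.div (measurable_const.mul (hfm.mul (measurable_const.add hfm)))
  have hcoord : Measurable (fun p : R3 => p 0) :=
    (EuclideanSpace.proj (0 : Fin 3) : R3 →L[ℝ] ℝ).continuous.measurable
  -- bound on the direction cosine
  have hcoordle : ∀ p : R3, |p 0| ≤ ‖p‖ := by
    intro p
    rw [EuclideanSpace.norm_eq, show |p 0| = Real.sqrt ((p 0)^2) from (Real.sqrt_sq_eq_abs _).symm]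
    apply Real.sqrt_le_sqrt
    have h := Finset.single_le_sum (f := fun i : Fin 3 => ‖p i‖^2)
      (fun i _ => by positivity) (Finset.mem_univ (0 : Fin 3))
    simpa [Real.norm_eq_abs, sq_abs] using h
  have hμle : ∀ p : R3, ‖ω - k * ((p 0 / ‖p‖ : ℝ) : ℂ)‖ ≤ ‖ω‖ + ‖k‖ := by
    intro p
    refine (norm_sub_le _ _).trans ?_
    have hc : ‖((p 0 / ‖p‖ : ℝ) : ℂ)‖ ≤ 1 := by
      rw [Complex.norm_real, Real.norm_eq_abs]
      rcases eq_or_ne p 0 with hp | hp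
      · simp [hp]
      · rw [abs_div, abs_norm]
        exact div_le_one_of_le₀ (hcoordle p) (norm_nonneg p)
    have : ‖k * ((p 0 / ‖p‖ : ℝ) : ℂ)‖ ≤ ‖k‖ := by
      rw [norm_mul]
      calc ‖k‖ * ‖((p 0 / ‖p‖ : ℝ) : ℂ)‖ ≤ ‖k‖ * 1 :=
            mul_le_mul_of_nonneg_left hc (norm_nonneg k)
        _ = ‖k‖ := mul_one _
    linarith
  -- Step A : multiply eq (ii) by w conj(δf) and integrate
  set X : R3 → ℂ := fun p => ((wgt T ‖p‖ * ‖δf p‖^2 : ℝ):ℂ) * (ω - k * ((p 0 / ‖p‖ : ℝ):ℂ))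
    with hXdef
  have hXm : AEStronglyMeasurable X volume := by
    apply Measurable.aestronglyMeasurable
    exact (Complex.measurable_ofReal.comp ((hwm.comp measurable_norm).mul
        ((measurable_norm.comp hδf).pow_const 2))).mul
      (measurable_const.sub (measurable_const.mul
        (Complex.measurable_ofReal.comp (hcoord.div measurable_norm))))
  have hXi : Integrable X := by
    refine Integrable.mono' (hInt1.mul_const (‖ω‖+‖k‖)) hXm ?_
    filter_upwards [hae0] with p hp
    have hp' : 0 < ‖p‖ := norm_pos_iff.mpr hp
    have hwn : 0 ≤ wgt T ‖p‖ * ‖δf p‖^2 :=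
      mul_nonneg (hwpos _ hp').le (by positivity)
    rw [hXdef]
    simp only []
    rw [norm_mul, Complex.norm_real, Real.norm_eq_abs, abs_of_nonneg hwn]
    exact mul_le_mul_of_nonneg_left (hμle p) hwn
  set fB : R3 → ℂ := fun p => ((wgt T ‖p‖ :ℝ):ℂ) * coll σA σS T δT δf p *
    (starRingEnd ℂ) (δf p) with hfBdef
  have hfB_eq : fB =ᵐ[volume] (fun p => -Complex.I * X p) := by
    filter_upwards [heq2] with p hp
    rw [hfBdef, hXdef]
    simp only []
    rw [← hp]
    simp only [Complex.ofReal_mul, Complex.ofReal_pow]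
    linear_combination ((wgt T ‖p‖ :ℝ):ℂ) * (-Complex.I) * (ω - k * ((p 0 / ‖p‖ : ℝ):ℂ)) *
      (hzz (δf p))
  have hIfB : Integrable fB := ((hXi.const_mul (-Complex.I)).congr hfB_eq.symm)
  have hA : ∫ p : R3, fB p = -Complex.I * ∫ p : R3, X p := by
    rw [integral_congr_ae hfB_eq, integral_const_mul]
  -- Step B : multiply eq (i) by conj(δT)/T²
  have hkey : ∀ p : R3, p ≠ 0 →
      ((wgt T ‖p‖ :ℝ):ℂ) * (starRingEnd ℂ) (δfBB T δT ‖p‖) * coll σA σS T δT δf p =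
      (((2 / (2 * π) ^ 3 * ‖p‖ : ℝ) : ℂ) * coll σA σS T δT δf p) *
        ((starRingEnd ℂ) δT / (T:ℂ)^2) := by
    intro p hp
    have hq : 0 < ‖p‖ := norm_pos_iff.mpr hp
    have hf := hfBBpos _ hq
    have hg0 : fBB T ‖p‖ * (1 + fBB T ‖p‖) ≠ 0 := (mul_pos hf (by linarith)).ne'
    have hreal : wgt T ‖p‖ * (fBB T ‖p‖ * (1 + fBB T ‖p‖) * ‖p‖ / T^2) =
        2 / (2*π)^3 * ‖p‖ / T^2 := by
      unfold wgt
      have hpi : ((2*π)^3 : ℝ) ≠ 0 := by positivity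
      field_simp
    have hcast : ((wgt T ‖p‖ :ℝ):ℂ) * ((fBB T ‖p‖ * (1 + fBB T ‖p‖) * ‖p‖ / T ^ 2 : ℝ):ℂ) =
        ((2 / (2 * π) ^ 3 * ‖p‖ : ℝ):ℂ) / (T:ℂ)^2 := by
      have h := congrArg (Complex.ofReal) hreal
      push_cast at h ⊢
      linear_combination h
    rw [δfBB, map_mul, Complex.conj_ofReal]
    linear_combination ((starRingEnd ℂ) δT) * coll σA σS T δT δf p * hcast
  set fC : R3 → ℂ := fun p => ((wgt T ‖p‖ :ℝ):ℂ) * (starRingEnd ℂ) (δfBB T δT ‖p‖) *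
    coll σA σS T δT δf p with hfCdef
  have hIfC : Integrable fC := by
    have h := hInt4.mul_const ((starRingEnd ℂ) δT / (T:ℂ)^2)
    refine h.congr ?_
    filter_upwards [hae0] with p hp
    exact (hkey p hp).symm
  have hB : -Complex.I * (((cM * ‖δT‖^2 / T^2 : ℝ)):ℂ) * ω = -∫ p : R3, fC p := by
    have h1 := congrArg (fun z => z * ((starRingEnd ℂ) δT / (T:ℂ)^2)) heq1
    have hL : (-Complex.I * (cM:ℂ) * ω * δT) * ((starRingEnd ℂ) δT / (T:ℂ)^2) =
        -Complex.I * (((cM * ‖δT‖^2 / T^2 : ℝ)):ℂ) * ω := by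
      have h2 := hzz δT
      push_cast
      field_simp
      linear_combination -(cM:ℂ) * ω * h2
    have hR : (-∫ p : R3, ((2 / (2 * π) ^ 3 * ‖p‖ : ℝ) : ℂ) * coll σA σS T δT δf p) *
        ((starRingEnd ℂ) δT / (T:ℂ)^2) = -∫ p : R3, fC p := by
      rw [neg_mul, ← integral_mul_const]
      refine congrArg Neg.neg ?_
      refine integral_congr_ae ?_
      filter_upwards [hae0] with p hp
      exact (hkey p hp).symm
    rw [← hL, h1, hR]
  -- combined integrand
  set hfun : R3 → ℂ := fun p => ((wgt T ‖p‖ :ℝ):ℂ) * coll σA σS T δT δf p *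
    (starRingEnd ℂ) (δfBB T δT ‖p‖ - δf p) with hhfun
  have hfun_eq : hfun = fun p => fC p - fB p := by
    funext p
    rw [hhfun, hfCdef, hfBdef]
    simp only [map_sub]
    ring
  have hIh : Integrable hfun := by rw [hfun_eq]; exact hIfC.sub hIfB
  set Afun : R3 → ℂ := fun p => ((wgt T ‖p‖ * σA ‖p‖ * ‖δfBB T δT ‖p‖ - δf p‖^2 : ℝ):ℂ)
    with hAdef
  set Bfun : R3 → ℂ := fun p => ((wgt T ‖p‖ * σS ‖p‖ * ‖sphAvg δf ‖p‖ - δf p‖^2 : ℝ):ℂ)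
    with hBdef
  set G : ℝ → ℂ := fun q => ((wgt T q * σS q : ℝ):ℂ) *
    (starRingEnd ℂ) (δfBB T δT q - sphAvg δf q) with hGdef
  have hptw : ∀ p : R3, hfun p = Afun p + Bfun p + G ‖p‖ * (sphAvg δf ‖p‖ - δf p) := by
    intro p
    have h1 := hzz (δfBB T δT ‖p‖ - δf p)
    have h2 := hzz (sphAvg δf ‖p‖ - δf p)
    simp only [map_sub] at h1 h2
    rw [hhfun, hAdef, hBdef, hGdef]
    unfold coll
    simp only [map_sub]
    push_cast
    linear_combination ((wgt T ‖p‖:ℝ):ℂ) * ((σA ‖p‖:ℝ):ℂ) * h1 +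
      ((wgt T ‖p‖:ℝ):ℂ) * ((σS ‖p‖:ℝ):ℂ) * h2
  have hIA : Integrable Afun := hInt2.ofReal
  have hIB : Integrable Bfun := hInt3.ofReal
  have hUeq : (fun p : R3 => G ‖p‖ * (sphAvg δf ‖p‖ - δf p)) =
      fun p => hfun p - (Afun p + Bfun p) := by
    funext p; rw [hptw p]; ring
  have hIu : Integrable (fun p : R3 => G ‖p‖ * (sphAvg δf ‖p‖ - δf p)) := by
    rw [hUeq]; exact hIh.sub (hIA.add hIB)
  have hzero := integral_sphere_diff_zero δf G hIu
  -- final assembly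
  have hsplit : (fun p : R3 => wgt T ‖p‖ * (σA ‖p‖ * ‖δfBB T δT ‖p‖ - δf p‖ ^ 2 +
      σS ‖p‖ * ‖sphAvg δf ‖p‖ - δf p‖ ^ 2)) =
      fun p : R3 => (wgt T ‖p‖ * σA ‖p‖ * ‖δfBB T δT ‖p‖ - δf p‖ ^ 2) +
        (wgt T ‖p‖ * σS ‖p‖ * ‖sphAvg δf ‖p‖ - δf p‖ ^ 2) := by
    funext p; ring
  calc -Complex.I * ((((cM * ‖δT‖ ^ 2 / T ^ 2 : ℝ)):ℂ) * ω + ∫ p : R3, X p)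
      = -Complex.I * (((cM * ‖δT‖ ^ 2 / T ^ 2 : ℝ)):ℂ) * ω + -Complex.I * ∫ p : R3, X p := by
        ring
    _ = (-∫ p : R3, fC p) + ∫ p : R3, fB p := by rw [hB, ← hA]
    _ = -((∫ p : R3, fC p) - ∫ p : R3, fB p) := by ring
    _ = -∫ p : R3, (fC p - fB p) := by rw [integral_sub hIfC hIfB]
    _ = -∫ p : R3, hfun p := by rw [hfun_eq]
    _ = -∫ p : R3, (Afun p + Bfun p + G ‖p‖ * (sphAvg δf ‖p‖ - δf p)) := by
        rw [show hfun = fun p => Afun p + Bfun p + G ‖p‖ * (sphAvg δf ‖p‖ - δf p) from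
          funext hptw]
    _ = -((∫ p : R3, Afun p) + (∫ p : R3, Bfun p) + ∫ p : R3, G ‖p‖ *
        (sphAvg δf ‖p‖ - δf p)) := by
        have hIAB : Integrable (fun p : R3 => Afun p + Bfun p) := hIA.add hIB
        rw [integral_add hIAB hIu, integral_add hIA hIB]
    _ = -(((∫ p : R3, wgt T ‖p‖ * σA ‖p‖ * ‖δfBB T δT ‖p‖ - δf p‖ ^ 2 : ℝ):ℂ) +
        ((∫ p : R3, wgt T ‖p‖ * σS ‖p‖ * ‖sphAvg δf ‖p‖ - δf p‖ ^ 2 : ℝ):ℂ)) := by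
        have hAre : ∫ p : R3, Afun p =
            ((∫ p : R3, wgt T ‖p‖ * σA ‖p‖ * ‖δfBB T δT ‖p‖ - δf p‖ ^ 2 : ℝ):ℂ) :=
          integral_ofReal
        have hBre : ∫ p : R3, Bfun p =
            ((∫ p : R3, wgt T ‖p‖ * σS ‖p‖ * ‖sphAvg δf ‖p‖ - δf p‖ ^ 2 : ℝ):ℂ) :=
          integral_ofReal
        rw [hzero, add_zero, hAre, hBre]
    _ = -((∫ p : R3, wgt T ‖p‖ * (σA ‖p‖ * ‖δfBB T δT ‖p‖ - δf p‖ ^ 2 +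
          σS ‖p‖ * ‖sphAvg δf ‖p‖ - δf p‖ ^ 2) : ℝ) : ℂ) := by
        rw [hsplit, integral_add hInt2 hInt3]
        push_cast
        ring
end
end

section
/- Let T > 0 and c_M > 0. Let δT ∈ ℝ and let δf : ℝ³∖{0} → ℝ be measurable with ∫_{ℝ³} w(|p|) δf(p)² d³p < ∞. Define the information current components E⁰ = c_M δT²/(2T²) + (1/2)∫_{ℝ³} w(|p|) δf(p)² d³p and E^j = (1/2)∫_{ℝ³} w(|p|) δf(p)² (p^j/|p|) d³p for j = 1,2,3. If c_M δT²/T² + ∫_{ℝ³} w(|p|) δf(p)² d³p > 0, then E⁰ > 0 and (E⁰)² − (E¹)² − (E²)² − (E³)² > 0; that is, the information current E^μ is timelike and future-directed. -/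
/-!
Statement 3 (key step in Theorem 1): the information current `E^μ` of the
matter+radiation system is timelike and future-directed for any nonzero
perturbation `(δT, δf)`.
-/

noncomputable section
open MeasureTheory Real Set
open scoped RealInnerProductSpace

lemma wgt_nonneg {T : ℝ} (hT : 0 < T) (q : ℝ) (hq : 0 ≤ q) : 0 ≤ wgt T q := by
  rcases eq_or_lt_of_le hq with h | h
  · simp [wgt, fBB, ← h]
  · have h1 : 1 < Real.exp (q / T) := by
      rw [← Real.exp_zero]
      exact Real.exp_lt_exp.2 (div_pos h hT)
    have hf : 0 < fBB T q :=
      div_pos one_pos (by linarith)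
    unfold wgt
    positivity

lemma abs_apply_le_norm (p : R3) (i : Fin 3) : |p i| ≤ ‖p‖ := by
  rw [EuclideanSpace.norm_eq, ← Real.sqrt_sq_eq_abs]
  apply Real.sqrt_le_sqrt
  have : p i ^ 2 ≤ ∑ j : Fin 3, ‖p j‖ ^ 2 := by
    have := Finset.single_le_sum (f := fun j => ‖p j‖ ^ 2)
      (fun j _ => by positivity) (Finset.mem_univ i)
    simpa [sq_abs] using this
  exact this

lemma measurable_nj (i : Fin 3) : Measurable (fun p : R3 => p i / ‖p‖) :=
  (EuclideanSpace.proj i).continuous.measurable.div (measurable_norm (α := R3))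

lemma nj_abs_le_one (p : R3) (i : Fin 3) : |p i / ‖p‖| ≤ 1 := by
  rw [abs_div, abs_norm]
  exact div_le_one_of_le₀ (abs_apply_le_norm p i) (norm_nonneg p)

lemma integrable_Fnj {F : R3 → ℝ} (hm : Measurable F) (hF : Integrable F) (i : Fin 3) :
    Integrable (fun p : R3 => F p * (p i / ‖p‖)) := by
  refine hF.mono ((hm.mul (measurable_nj i)).aestronglyMeasurable) (ae_of_all _ fun p => ?_)
  rw [norm_mul]
  calc ‖F p‖ * ‖p i / ‖p‖‖ ≤ ‖F p‖ * 1 :=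
        mul_le_mul_of_nonneg_left (by rw [Real.norm_eq_abs, abs_div, abs_norm]; exact div_le_one_of_le₀ (abs_apply_le_norm p i) (norm_nonneg p)) (norm_nonneg _)
    _ = ‖F p‖ := mul_one _

lemma key (F : R3 → ℝ) (hm : Measurable F) (hF : Integrable F)
    (hF0 : ∀ p, 0 ≤ F p) (hI : 0 < ∫ p : R3, F p) :
    (∫ p : R3, F p * (p 0 / ‖p‖)) ^ 2 + (∫ p : R3, F p * (p 1 / ‖p‖)) ^ 2 +
      (∫ p : R3, F p * (p 2 / ‖p‖)) ^ 2 < (∫ p : R3, F p) ^ 2 := by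
  set I : ℝ := ∫ p : R3, F p with hIdef
  set E : Fin 3 → ℝ := fun i => ∫ p : R3, F p * (p i / ‖p‖) with hEdef
  have hInt_i : ∀ i : Fin 3, Integrable (fun p : R3 => F p * (p i / ‖p‖)) :=
    integrable_Fnj hm hF
  show E 0 ^ 2 + E 1 ^ 2 + E 2 ^ 2 < I ^ 2
  set u : R3 := (WithLp.equiv 2 (Fin 3 → ℝ)).symm E with hudef
  have hui : ∀ i, u i = E i := fun i => rfl
  have hnormu : ‖u‖ ^ 2 = E 0 ^ 2 + E 1 ^ 2 + E 2 ^ 2 := by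
    rw [EuclideanSpace.norm_eq, Real.sq_sqrt (by positivity)]
    simp [hui, Fin.sum_univ_three, sq_abs]
  -- inner product formula
  have hinner : ∀ p : R3, ⟪u, p⟫ = ∑ i : Fin 3, E i * p i := by
    intro p
    simp [PiLp.inner_apply, RCLike.inner_apply, conj_trivial, hui]
    exact Finset.sum_congr rfl fun i _ => mul_comm _ _
  -- the integrand sum
  have hIntSum : Integrable (fun p : R3 => F p * (⟪u, p⟫ / ‖p‖)) := by
    have : (fun p : R3 => F p * (⟪u, p⟫ / ‖p‖)) =
        (fun p : R3 => ∑ i : Fin 3, E i * (F p * (p i / ‖p‖))) := by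
      funext p
      rw [hinner p, Finset.sum_div, Finset.mul_sum]
      congr 1; funext i; ring
    rw [this]
    exact integrable_finset_sum _ fun i _ => (hInt_i i).const_mul _
  have hsum : ‖u‖ ^ 2 = ∫ p : R3, F p * (⟪u, p⟫ / ‖p‖) := by
    rw [hnormu]
    have : ∫ p : R3, F p * (⟪u, p⟫ / ‖p‖) =
        ∑ i : Fin 3, E i * ∫ p : R3, F p * (p i / ‖p‖) := by
      rw [← Finset.sum_congr rfl fun i _ => (integral_const_mul (E i) _)]
      rw [← integral_finset_sum _ fun i _ => (hInt_i i).const_mul (E i)]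
      congr 1; funext p
      rw [hinner p, Finset.sum_div, Finset.mul_sum]
      congr 1; funext i; ring
    rw [this]
    simp [Fin.sum_univ_three, ← hEdef, sq]
    rfl
  have hptwise : ∀ p : R3, F p * (⟪u, p⟫ / ‖p‖) ≤ F p * ‖u‖ := by
    intro p
    refine mul_le_mul_of_nonneg_left ?_ (hF0 p)
    rcases eq_or_lt_of_le (norm_nonneg p) with h | h
    · simp [← h]
    · rw [div_le_iff₀ h]
      exact real_inner_le_norm u p
  have hle : ‖u‖ ^ 2 ≤ ‖u‖ * I := by
    rw [hsum]
    calc ∫ p : R3, F p * (⟪u, p⟫ / ‖p‖) ≤ ∫ p : R3, F p * ‖u‖ :=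
          integral_mono hIntSum (hF.mul_const _) hptwise
      _ = ‖u‖ * I := by rw [integral_mul_const]; ring
  rcases eq_or_ne u 0 with hu0 | hu0
  · have : ∀ i, E i = 0 := by intro i; rw [← hui, hu0]; rfl
    rw [this 0, this 1, this 2]
    simpa using pow_pos hI 2
  · have hupos : 0 < ‖u‖ := norm_pos_iff.2 hu0
    have huleI : ‖u‖ ≤ I := by
      nlinarith
    have hlt : ‖u‖ < I := by
      rcases lt_or_eq_of_le huleI with h | h
      · exact h
      · exfalso
        -- equality case
        have hg0 : ∀ p : R3, 0 ≤ F p * ‖u‖ - F p * (⟪u, p⟫ / ‖p‖) :=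
          fun p => sub_nonneg.2 (hptwise p)
        have hgint : Integrable (fun p : R3 => F p * ‖u‖ - F p * (⟪u, p⟫ / ‖p‖)) :=
          (hF.mul_const _).sub hIntSum
        have hgzero : ∫ p : R3, (F p * ‖u‖ - F p * (⟪u, p⟫ / ‖p‖)) = 0 := by
          rw [integral_sub (hF.mul_const _) hIntSum, integral_mul_const, ← hsum, ← hIdef]
          rw [← h]; ring
        have hae : ∀ᵐ p : R3, F p * ‖u‖ - F p * (⟪u, p⟫ / ‖p‖) = 0 := by
          have := (integral_eq_zero_iff_of_nonneg hg0 hgint).1 hgzero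
          filter_upwards [this] with p hp
          simpa using hp
        have hspan : (volume : Measure R3) ((Submodule.span ℝ {u} : Submodule ℝ R3) : Set R3) = 0 := by
          apply Measure.addHaar_submodule
          intro htop
          have h1 : Module.finrank ℝ (Submodule.span ℝ {u} : Submodule ℝ R3) = 1 :=
            finrank_span_singleton hu0
          rw [htop, finrank_top] at h1
          simp [finrank_euclideanSpace_fin] at h1
        have haeF : ∀ᵐ p : R3, F p = 0 := by
          have hnotin : ∀ᵐ p : R3, p ∉ (Submodule.span ℝ {u} : Submodule ℝ R3) := by
            rw [ae_iff]
            simpa using hspan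
          filter_upwards [hae, hnotin] with p hp hpn
          by_contra hFp
          have hFpos : 0 < F p := lt_of_le_of_ne (hF0 p) (Ne.symm hFp)
          have heq : ⟪u, p⟫ / ‖p‖ = ‖u‖ := by
            have h2 : F p * (‖u‖ - ⟪u, p⟫ / ‖p‖) = 0 := by rw [mul_sub]; linarith
            rcases mul_eq_zero.1 h2 with h3 | h3
            · exact absurd h3 hFp
            · linarith
          have hp0 : p ≠ 0 := fun h0 => hpn (h0 ▸ Submodule.zero_mem _)
          have hnp : 0 < ‖p‖ := norm_pos_iff.2 hp0
          rw [div_eq_iff (ne_of_gt hnp)] at heq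
          have hsmul : ‖p‖ • u = ‖u‖ • p := inner_eq_norm_mul_iff_real.1 heq
          apply hpn
          have : p = ‖u‖⁻¹ • ‖p‖ • u := by
            rw [hsmul, smul_smul, inv_mul_cancel₀ (ne_of_gt hupos), one_smul]
          rw [this]
          exact Submodule.smul_mem _ _ (Submodule.smul_mem _ _ (Submodule.mem_span_singleton_self u))
        have : I = 0 := by
          rw [hIdef]
          exact integral_eq_zero_of_ae haeF
        linarith
    calc E 0 ^ 2 + E 1 ^ 2 + E 2 ^ 2 = ‖u‖ ^ 2 := hnormu.symm
      _ < I ^ 2 := by nlinarith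

lemma measurable_wgt (T : ℝ) : Measurable (fun q : ℝ => wgt T q) := by
  unfold wgt fBB
  have h1 : Measurable (fun q : ℝ => 1 / (Real.exp (q / T) - 1)) :=
    measurable_const.div ((Real.measurable_exp.comp (measurable_id.div_const T)).sub
      measurable_const)
  exact measurable_const.div
    ((measurable_const.mul (h1.mul (measurable_const.add h1))))

theorem information_current_timelike_future_directed
    (T cM : ℝ) (hT : 0 < T) (hcM : 0 < cM)
    (δT : ℝ) (δf : R3 → ℝ) (hδf : Measurable δf)
    (hInt : Integrable (fun p : R3 => wgt T ‖p‖ * δf p ^ 2))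
    (hne : 0 < cM * δT ^ 2 / T ^ 2 + ∫ p : R3, wgt T ‖p‖ * δf p ^ 2) :
    0 < cM * δT ^ 2 / (2 * T ^ 2) + (1 / 2) * ∫ p : R3, wgt T ‖p‖ * δf p ^ 2 ∧
    (cM * δT ^ 2 / (2 * T ^ 2) + (1 / 2) * ∫ p : R3, wgt T ‖p‖ * δf p ^ 2) ^ 2 -
        ((1 / 2) * ∫ p : R3, wgt T ‖p‖ * δf p ^ 2 * (p 0 / ‖p‖)) ^ 2 -
        ((1 / 2) * ∫ p : R3, wgt T ‖p‖ * δf p ^ 2 * (p 1 / ‖p‖)) ^ 2 -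
        ((1 / 2) * ∫ p : R3, wgt T ‖p‖ * δf p ^ 2 * (p 2 / ‖p‖)) ^ 2 > 0 := by
  set F : R3 → ℝ := fun p => wgt T ‖p‖ * δf p ^ 2 with hFdef
  have hm : Measurable F := ((measurable_wgt T).comp (measurable_norm (α := R3))).mul
    (hδf.pow_const 2)
  have hF0 : ∀ p, 0 ≤ F p := fun p =>
    mul_nonneg (wgt_nonneg hT _ (norm_nonneg p)) (sq_nonneg _)
  have hA : cM * δT ^ 2 / (2 * T ^ 2) = (cM * δT ^ 2 / T ^ 2) / 2 := by
    rw [div_div, mul_comm 2 (T^2)]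
  set A : ℝ := cM * δT ^ 2 / T ^ 2 with hAdef
  have hA0 : 0 ≤ A := by positivity
  set I : ℝ := ∫ p : R3, F p with hIdef
  have hI0 : 0 ≤ I := integral_nonneg hF0
  rw [hA]
  have hfirst : 0 < A / 2 + (1 / 2) * I := by linarith
  refine ⟨hfirst, ?_⟩
  rcases eq_or_lt_of_le hI0 with hIz | hIpos
  · -- I = 0 : all spatial components vanish
    have hFae : F =ᵐ[volume] 0 := (integral_eq_zero_iff_of_nonneg hF0 hInt).1 hIz.symm
    have hEz : ∀ i : Fin 3, ∫ p : R3, F p * (p i / ‖p‖) = 0 := by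
      intro i
      apply integral_eq_zero_of_ae
      filter_upwards [hFae] with p hp
      simp only [Pi.zero_apply] at hp
      simp [hp]
    have h0 : ∫ p : R3, F p * (p 0 / ‖p‖) = 0 := hEz 0
    have h1 : ∫ p : R3, F p * (p 1 / ‖p‖) = 0 := hEz 1
    have h2 : ∫ p : R3, F p * (p 2 / ‖p‖) = 0 := hEz 2
    show (A / 2 + (1/2) * I) ^ 2 - ((1/2) * ∫ p : R3, F p * (p 0 / ‖p‖)) ^ 2 -
        ((1/2) * ∫ p : R3, F p * (p 1 / ‖p‖)) ^ 2 -
        ((1/2) * ∫ p : R3, F p * (p 2 / ‖p‖)) ^ 2 > 0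
    rw [h0, h1, h2]
    nlinarith [hfirst]
  · have hkey := key F hm hInt hF0 hIpos
    show (A / 2 + (1/2) * I) ^ 2 - ((1/2) * ∫ p : R3, F p * (p 0 / ‖p‖)) ^ 2 -
        ((1/2) * ∫ p : R3, F p * (p 1 / ‖p‖)) ^ 2 -
        ((1/2) * ∫ p : R3, F p * (p 2 / ‖p‖)) ^ 2 > 0
    nlinarith [hkey, mul_nonneg hA0 hI0, sq_nonneg A]
end
end
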